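/- arXiv:math/0701743 — 4 statements merged into one kernel-verified Lean document; each statement's English description precedes it below -/
import Mathlib

section
/- For every complex number α with Re(α) > 0 and every complex z with |z| < 1, Li_α(z) = (1/Γ(α)) · ∫_0^∞ q^(α-1) · z/(e^q − z) dq (Appell's integral representation). -/
open Complex MeasureTheory

/-! For `q > 0` expand `z / (e^q - z) = ∑ z^(n+1) e^(-(n+1) q)` as a geometric series and integrate
termwise against `q^(α-1)`: the `n`-th term contributes `Γ(α) z^(n+1) / (n+1)^α`. Termwise integration
is legitimate because `∑ |z|^(n+1) / (n+1)^(Re α)` converges (`hasSum_mellin`). -/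

theorem hasSum_pow_succ_mul_exp_neg_mul {z : ℂ} {t : ℝ} (hz : ‖z‖ < Real.exp t) :
    HasSum (fun n : ℕ ↦ z ^ (n + 1) * (Real.exp (-((n : ℝ) + 1) * t) : ℂ))
      (z / (exp t - z)) := by
  set w := z * exp (-t) with hw_def
  have hw : ‖w‖ < 1 := by
    rw [norm_mul, norm_exp, neg_re, ofReal_re, Real.exp_neg, ← div_eq_mul_inv,
      div_lt_one (Real.exp_pos t)]
    exact hz
  have hterm (n : ℕ) : w * w ^ n = z ^ (n + 1) * (Real.exp (-((n : ℝ) + 1) * t) : ℂ) := by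
    rw [← pow_succ', hw_def, mul_pow, ← exp_nat_mul]
    push_cast
    ring_nf
  have hsum : w * (1 - w)⁻¹ = z / (exp t - z) := by
    have hexp : exp t - z ≠ 0 := fun h ↦ by
      rw [← sub_eq_zero.mp h, norm_exp, ofReal_re] at hz
      exact lt_irrefl _ hz
    rw [hw_def, exp_neg]
    field_simp
  rw [← hsum]
  exact ((hasSum_geometric_of_norm_lt_one hw).mul_left w).congr_fun fun n ↦ (hterm n).symm

theorem summable_norm_pow_succ_div_rpow {z : ℂ} (hz : ‖z‖ < 1) {s : ℝ} (hs : 0 ≤ s) :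
    Summable fun n : ℕ ↦ ‖z ^ (n + 1)‖ / ((n : ℝ) + 1) ^ s := by
  refine .of_nonneg_of_le (fun n ↦ by positivity) (fun n ↦ ?_)
    ((summable_geometric_of_lt_one (norm_nonneg z) hz).comp_injective (add_left_injective 1))
  rw [norm_pow]
  exact div_le_self (by positivity) (Real.one_le_rpow (by linarith [n.cast_nonneg (α := ℝ)]) hs)

/-- Appell's integral representation: for `Re α > 0` and `|z| < 1`,
`Li_α(z) = (1/Γ(α)) ∫_0^∞ q^(α-1) z/(e^q - z) dq`. -/
theorem polylog_eq_appell_integral (α : ℂ) (hα : 0 < α.re) (z : ℂ) (hz : ‖z‖ < 1) :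
    (∑' n : ℕ, z ^ (n + 1) / ((n : ℂ) + 1) ^ α) =
      (1 / Complex.Gamma α) *
        ∫ q in Set.Ioi (0 : ℝ), (q : ℂ) ^ (α - 1) * (z / (Complex.exp q - z)) := by
  have hmellin := hasSum_mellin (a := fun n : ℕ ↦ z ^ (n + 1)) (p := fun n ↦ (n : ℝ) + 1)
    (fun n ↦ .inr n.cast_add_one_pos) hα
    (fun t ht ↦ hasSum_pow_succ_mul_exp_neg_mul (hz.trans_le (Real.one_le_exp ht.le)))
    (summable_norm_pow_succ_div_rpow hz hα.le)
  simp only [mellin, smul_eq_mul, ofReal_add, ofReal_natCast, ofReal_one, mul_div_assoc]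
    at hmellin
  rw [← hmellin.tsum_eq, tsum_mul_left, one_div, inv_mul_cancel_left₀ (Gamma_ne_zero_of_re_pos hα)]
end

section
/- For every complex α with Re(α) > 0, as z → ∞ along a ray z = |z| e^{iθ} with fixed θ ∈ (0, 2π), one has Li_α(z) = −(1/Γ(α+1)) · ((Log z)^α + o((Log z)^α)), where Li_α denotes the analytic continuation of the polylogarithm to ℂ ∖ [1,∞) given by Appell's integral. -/
/-! Write `z = r ω` with `ω = e^{iθ}`, and substitute `q = u log r` in Appell's integral. Then
`Γ(α) Li_α(z) = (log r)^α ∫₀^∞ u^{α-1} ω / (r^{u-1} - ω) du`, and as `r → ∞` the kernel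
`ω / (r^{u-1} - ω)` tends to `-1` for `u < 1` and to `0` for `u > 1`. Since `ω` stays away from
`[0, ∞)`, the kernel is dominated by a multiple of `e^{1-u}`, so the integral tends to
`-∫₀¹ u^{α-1} du = -1/α`. Finally `Log z = log r + Log ω`, so `(Log z)^α / (log r)^α → 1`. -/

open Complex MeasureTheory Filter Topology Set
-- With this order, `0 ≤ z` means `z ∈ [0, ∞)`.
open scoped ComplexOrder

noncomputable section

def appellKernel (ω : ℂ) (t : ℝ) : ℂ := ω / (exp t - ω)

def polylog (α z : ℂ) : ℂ :=
  1 / Gamma α * ∫ q in Ioi (0 : ℝ), (q : ℂ) ^ (α - 1) * appellKernel z q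

def rescaledAppellIntegral (α ω : ℂ) (x : ℝ) : ℂ :=
  ∫ u in Ioi (0 : ℝ), (u : ℂ) ^ (α - 1) * appellKernel ω (x * (u - 1))

end

lemma not_zero_le_exp_mul_I {θ : ℝ} (hθ : θ ∈ Ioo 0 (2 * Real.pi)) :
    ¬ 0 ≤ exp (θ * I) := by
  rw [Complex.nonneg_iff, exp_ofReal_mul_I_re, exp_ofReal_mul_I_im]
  rintro ⟨hcos, hsin⟩
  have hθπ : θ - Real.pi = 0 := by
    rw [← Real.sin_eq_zero_iff_of_lt_of_lt (by linarith [hθ.1]) (by linarith [hθ.2]),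
      Real.sin_sub_pi, ← hsin, neg_zero]
  rw [sub_eq_zero.mp hθπ, Real.cos_pi] at hcos
  norm_num at hcos

lemma exists_pos_le_norm_ofReal_sub {ω : ℂ} (hω : ¬ 0 ≤ ω) :
    ∃ c > 0, ∀ s : ℝ, 0 ≤ s → c ≤ ‖(s : ℂ) - ω‖ := by
  refine ⟨Metric.infDist ω {z : ℂ | 0 ≤ z},
    (isClosed_Ici.notMem_iff_infDist_pos ⟨0, le_refl (0 : ℂ)⟩).mp hω, fun s hs => ?_⟩
  rw [← dist_eq_norm, dist_comm]
  exact Metric.infDist_le_dist_of_mem (zero_le_real.mpr hs)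

lemma exists_pos_mul_one_add_le_norm_ofReal_sub {ω : ℂ} (hω : ¬ 0 ≤ ω) :
    ∃ c > 0, ∀ s : ℝ, 0 ≤ s → c * (1 + s) ≤ ‖(s : ℂ) - ω‖ := by
  obtain ⟨c₀, hc₀, hc₀s⟩ := exists_pos_le_norm_ofReal_sub hω
  -- `c₀` handles `s ≤ 2‖ω‖ + 1`; beyond that, `‖s - ω‖ ≥ s - ‖ω‖ ≥ (1 + s) / 2`.
  refine ⟨min (1 / 2) (c₀ / (2 * ‖ω‖ + 2)), by positivity, fun s hs => ?_⟩
  by_cases hs' : s ≤ 2 * ‖ω‖ + 1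
  · calc min (1 / 2) (c₀ / (2 * ‖ω‖ + 2)) * (1 + s)
        ≤ c₀ / (2 * ‖ω‖ + 2) * (2 * ‖ω‖ + 2) := by
          gcongr ?_ * ?_
          · exact min_le_right _ _
          · linarith
      _ = c₀ := div_mul_cancel₀ _ (by positivity)
      _ ≤ ‖(s : ℂ) - ω‖ := hc₀s s hs
  · calc min (1 / 2) (c₀ / (2 * ‖ω‖ + 2)) * (1 + s) ≤ 1 / 2 * (1 + s) := by
          gcongr; exact min_le_left _ _
      _ ≤ ‖(s : ℂ)‖ - ‖ω‖ := by rw [norm_real, Real.norm_of_nonneg hs]; linarith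
      _ ≤ ‖(s : ℂ) - ω‖ := norm_sub_norm_le _ _

lemma appellKernel_ofReal_exp_mul (ω : ℂ) (x q : ℝ) :
    appellKernel (Real.exp x * ω) q = appellKernel ω (q - x) := by
  have hsplit : exp (q : ℂ) = exp (x : ℂ) * exp ((q - x : ℝ) : ℂ) := by
    rw [← Complex.exp_add]; push_cast; ring_nf
  rw [appellKernel, appellKernel, ofReal_exp, hsplit, ← mul_sub,
    mul_div_mul_left _ _ (Complex.exp_ne_zero _)]

lemma tendsto_appellKernel_atBot {ω : ℂ} (hω : ω ≠ 0) :
    Tendsto (appellKernel ω) atBot (𝓝 (-1)) := by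
  have hexp : Tendsto (fun t : ℝ => exp (t : ℂ)) atBot (𝓝 0) := by
    simpa only [← ofReal_exp, Function.comp_def] using
      (continuous_ofReal.tendsto' 0 0 ofReal_zero).comp Real.tendsto_exp_atBot
  have := tendsto_const_nhds (x := ω) |>.div (hexp.sub_const ω) (by simpa using hω)
  rwa [zero_sub, div_neg_self hω] at this

lemma tendsto_appellKernel_atTop (ω : ℂ) :
    Tendsto (appellKernel ω) atTop (𝓝 0) := by
  have hexp : Tendsto (fun t : ℝ => exp (-t : ℂ)) atTop (𝓝 0) := by
    simpa only [← ofReal_neg, ← ofReal_exp, Function.comp_def] using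
      (continuous_ofReal.tendsto' 0 0 ofReal_zero).comp Real.tendsto_exp_neg_atTop_nhds_zero
  have hlim := (hexp.const_mul ω).div
    (tendsto_const_nhds (x := (1 : ℂ)) |>.sub (hexp.const_mul ω)) (by simp)
  rw [mul_zero, zero_div] at hlim
  refine hlim.congr fun t => ?_
  rw [Pi.div_apply, appellKernel, ← mul_div_mul_left ω _ (Complex.exp_ne_zero (-t : ℂ)),
    mul_sub, ← Complex.exp_add, neg_add_cancel, Complex.exp_zero, mul_comm]

lemma exists_norm_appellKernel_le {ω : ℂ} (hω : ¬ 0 ≤ ω) :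
    ∃ C ≥ 0, ∀ t : ℝ, ‖appellKernel ω t‖ ≤ C * (1 + Real.exp t)⁻¹ := by
  obtain ⟨c, hc, hcs⟩ := exists_pos_mul_one_add_le_norm_ofReal_sub hω
  refine ⟨‖ω‖ / c, by positivity, fun t => ?_⟩
  calc ‖appellKernel ω t‖ = ‖ω‖ / ‖((Real.exp t : ℝ) : ℂ) - ω‖ := by
        rw [appellKernel, norm_div, ofReal_exp]
    _ ≤ ‖ω‖ / (c * (1 + Real.exp t)) :=
        div_le_div_of_nonneg_left (norm_nonneg ω) (by positivity) (hcs _ (Real.exp_nonneg t))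
    _ = ‖ω‖ / c * (1 + Real.exp t)⁻¹ := by rw [← div_div, div_eq_mul_inv]

lemma inv_one_add_exp_mul_sub_one_le {x : ℝ} (hx : 1 ≤ x) (u : ℝ) :
    (1 + Real.exp (x * (u - 1)))⁻¹ ≤ Real.exp (1 - u) := by
  rcases le_total u 1 with hu | hu
  · calc (1 + Real.exp (x * (u - 1)))⁻¹ ≤ 1 :=
          inv_le_one_of_one_le₀ (le_add_of_nonneg_right (Real.exp_nonneg _))
      _ ≤ Real.exp (1 - u) := Real.one_le_exp (by linarith)
  · calc (1 + Real.exp (x * (u - 1)))⁻¹ ≤ (Real.exp (x * (u - 1)))⁻¹ :=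
          inv_anti₀ (Real.exp_pos _) (le_add_of_nonneg_left zero_le_one)
      _ = Real.exp (-(x * (u - 1))) := (Real.exp_neg _).symm
      _ ≤ Real.exp (1 - u) := Real.exp_le_exp.mpr (by nlinarith)

lemma integral_indicator_Iio_one_neg_cpow {α : ℂ} (hα : 0 < α.re) :
    ∫ u in Ioi (0 : ℝ), (Iio 1).indicator (fun u : ℝ => -(u : ℂ) ^ (α - 1)) u = -(1 / α) := by
  have hα0 : α ≠ 0 := fun h => by simp [h] at hα
  rw [setIntegral_indicator measurableSet_Iio, Ioi_inter_Iio, integral_neg,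
    ← integral_Ioc_eq_integral_Ioo, ← intervalIntegral.integral_of_le zero_le_one,
    integral_cpow (Or.inl (by simpa using hα))]
  simp [hα0]

theorem tendsto_rescaledAppellIntegral {α ω : ℂ} (hα : 0 < α.re) (hω : ¬ 0 ≤ ω) :
    Tendsto (rescaledAppellIntegral α ω) atTop (𝓝 (-(1 / α))) := by
  obtain ⟨C, hC0, hC⟩ := exists_norm_appellKernel_le hω
  have hω0 : ω ≠ 0 := fun h => hω (h ▸ le_refl (0 : ℂ))
  rw [← integral_indicator_Iio_one_neg_cpow hα]
  refine tendsto_integral_filter_of_dominated_convergence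
    (fun u => C * Real.exp 1 * (Real.exp (-u) * u ^ (α.re - 1))) ?_ ?_
    ((Real.GammaIntegral_convergent hα).const_mul _) ?_
  · refine Eventually.of_forall fun x => Measurable.aestronglyMeasurable ?_
    unfold appellKernel
    fun_prop
  · filter_upwards [eventually_ge_atTop 1] with x hx
    filter_upwards [ae_restrict_mem measurableSet_Ioi] with u (hu : 0 < u)
    rw [norm_mul, norm_cpow_eq_rpow_re_of_pos hu, sub_re, one_re]
    calc u ^ (α.re - 1) * ‖appellKernel ω (x * (u - 1))‖
        ≤ u ^ (α.re - 1) * (C * Real.exp (1 - u)) := by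
          gcongr
          exact (hC _).trans (mul_le_mul_of_nonneg_left (inv_one_add_exp_mul_sub_one_le hx u) hC0)
      _ = C * Real.exp 1 * (Real.exp (-u) * u ^ (α.re - 1)) := by
          rw [Real.exp_sub, Real.exp_neg]; ring
  · filter_upwards [Measure.ae_ne _ 1] with u hu
    rcases hu.lt_or_gt with hu | hu
    · rw [indicator_of_mem (mem_Iio.mpr hu), ← mul_neg_one]
      exact ((tendsto_appellKernel_atBot hω0).comp
        (tendsto_id.atTop_mul_const_of_neg (sub_neg.mpr hu))).const_mul _
    · rw [indicator_of_notMem (notMem_Iio.mpr hu.le), ← mul_zero ((u : ℂ) ^ (α - 1))]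
      exact ((tendsto_appellKernel_atTop ω).comp
        (tendsto_id.atTop_mul_const (sub_pos.mpr hu))).const_mul _

lemma polylog_ofReal_exp_mul (α ω : ℂ) {x : ℝ} (hx : 0 < x) :
    polylog α (Real.exp x * ω) = 1 / Gamma α * ((x : ℂ) ^ α * rescaledAppellIntegral α ω x) := by
  set g : ℝ → ℂ := fun q => (q : ℂ) ^ (α - 1) * appellKernel ω (q - x)
  have hsub : ∫ q in Ioi (0 : ℝ), g q = x • ∫ u in Ioi (0 : ℝ), g (x * u) := by
    rw [integral_comp_mul_left_Ioi g 0 hx, mul_zero, smul_inv_smul₀ hx.ne']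
  have hscale : ∫ u in Ioi (0 : ℝ), g (x * u) =
      (x : ℂ) ^ (α - 1) * rescaledAppellIntegral α ω x := by
    rw [rescaledAppellIntegral, ← integral_const_mul]
    refine setIntegral_congr_fun measurableSet_Ioi fun u (hu : 0 < u) => ?_
    simp only [g, ofReal_mul, mul_cpow_ofReal_nonneg hx.le hu.le, mul_sub_one]
    ring
  have hpow : (x : ℂ) * (x : ℂ) ^ (α - 1) = (x : ℂ) ^ α := by
    conv_rhs => rw [← add_sub_cancel 1 α, cpow_add _ _ (ofReal_ne_zero.mpr hx.ne'), cpow_one]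
  simp only [polylog, appellKernel_ofReal_exp_mul]
  rw [hsub, hscale, real_smul, ← mul_assoc (x : ℂ), hpow]

lemma ofReal_mul_cpow {r : ℝ} (hr : 0 < r) {w : ℂ} (hw : w ≠ 0) (α : ℂ) :
    ((r : ℂ) * w) ^ α = (r : ℂ) ^ α * w ^ α := by
  have hr' : (r : ℂ) ≠ 0 := ofReal_ne_zero.mpr hr.ne'
  rw [cpow_def_of_ne_zero (mul_ne_zero hr' hw), cpow_def_of_ne_zero hr', cpow_def_of_ne_zero hw,
    log_ofReal_mul hr hw, ← ofReal_log hr.le, ← Complex.exp_add, add_mul]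

lemma tendsto_ofReal_cpow_div_ofReal_add_cpow (α L : ℂ) :
    Tendsto (fun x : ℝ => (x : ℂ) ^ α / ((x : ℂ) + L) ^ α) atTop (𝓝 1) := by
  have hinv : Tendsto (fun x : ℝ => ((x⁻¹ : ℝ) : ℂ)) atTop (𝓝 0) :=
    (continuous_ofReal.tendsto' 0 0 ofReal_zero).comp tendsto_inv_atTop_zero
  have hshift : Tendsto (fun x : ℝ => 1 + L * ((x⁻¹ : ℝ) : ℂ)) atTop (𝓝 1) := by
    simpa using (hinv.const_mul L).const_add 1
  have hpow : Tendsto (fun x : ℝ => ((1 + L * ((x⁻¹ : ℝ) : ℂ)) ^ α)⁻¹) atTop (𝓝 1) := by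
    simpa using ((continuousAt_cpow_const (by simp)).tendsto.comp hshift).inv₀ (by simp)
  refine hpow.congr' ?_
  filter_upwards [eventually_gt_atTop ‖L‖] with x hxL
  have hx : 0 < x := (norm_nonneg L).trans_lt hxL
  have hx' : (x : ℂ) ≠ 0 := ofReal_ne_zero.mpr hx.ne'
  have hfac : (x : ℂ) + L = x * (1 + L * ((x⁻¹ : ℝ) : ℂ)) := by
    push_cast; field_simp
  have hxL' : (x : ℂ) + L ≠ 0 := by
    intro h
    have := congrArg norm (eq_neg_of_add_eq_zero_left h)
    rw [norm_real, norm_neg, Real.norm_of_nonneg hx.le] at this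
    exact hxL.ne' this
  have hw : 1 + L * ((x⁻¹ : ℝ) : ℂ) ≠ 0 := right_ne_zero_of_mul (hfac ▸ hxL')
  rw [hfac, ofReal_mul_cpow hx hw, div_mul_cancel_left₀ (cpow_ne_zero_iff.mpr (Or.inl hx'))]

/-- Asymptotics of the fractional polylogarithm along a ray: for `Re α > 0` and fixed
`θ ∈ (0, 2π)`, the analytic continuation of `Li_α` given by Appell's integral satisfies
`Li_α(z) = -(1/Γ(α+1)) ((Log z)^α + o((Log z)^α))` as `z = r e^{iθ}, r → ∞`,
equivalently `Li_α(z)/(Log z)^α → -1/Γ(α+1)`. -/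
theorem polylog_asymptotics (α : ℂ) (hα : 0 < α.re) (θ : ℝ) (hθ : θ ∈ Set.Ioo 0 (2 * Real.pi)) :
    Tendsto
      (fun r : ℝ =>
        ((1 / Complex.Gamma α) *
            ∫ q in Set.Ioi (0 : ℝ),
              (q : ℂ) ^ (α - 1) *
                ((r : ℂ) * Complex.exp (θ * Complex.I) /
                  (Complex.exp q - (r : ℂ) * Complex.exp (θ * Complex.I)))) /
          Complex.log ((r : ℂ) * Complex.exp (θ * Complex.I)) ^ α)
      atTop
      (𝓝 (-(1 / Complex.Gamma (α + 1)))) := by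
  set ω := exp (θ * I)
  show Tendsto (fun r : ℝ => polylog α (r * ω) / log (r * ω) ^ α) atTop _
  have hα0 : α ≠ 0 := fun h => by simp [h] at hα
  have hlim : Tendsto (fun x : ℝ => 1 / Gamma α * rescaledAppellIntegral α ω x *
      ((x : ℂ) ^ α / ((x : ℂ) + log ω) ^ α)) atTop (𝓝 (-(1 / Gamma (α + 1)))) := by
    have hval : -(1 / Gamma (α + 1)) = 1 / Gamma α * -(1 / α) * 1 := by
      rw [Gamma_add_one α hα0]; ring
    rw [hval]
    exact ((tendsto_rescaledAppellIntegral hα (not_zero_le_exp_mul_I hθ)).const_mul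
      (1 / Gamma α)).mul (tendsto_ofReal_cpow_div_ofReal_add_cpow α (log ω))
  refine (hlim.comp Real.tendsto_log_atTop).congr' ?_
  filter_upwards [eventually_gt_atTop 1] with r hr
  have hr0 : 0 < r := one_pos.trans hr
  have hpolylog := polylog_ofReal_exp_mul α ω (Real.log_pos hr)
  rw [Real.exp_log hr0] at hpolylog
  rw [Function.comp_apply, hpolylog, log_ofReal_mul hr0 (exp_ne_zero _)]
  ring
end

section
/- For every complex α with Re(α) > 0 and every z ∈ ℂ ∖ [1,∞), the integral ∫_0^∞ q^{α−1} z/(e^q − z) dq converges absolutely, and the function of z so defined is holomorphic on ℂ ∖ [1,∞). -/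
/-!
Put `w = e^{-q} ∈ (0, 1]`. Then `z / (e^q - z) = z w (1 - z w)⁻¹` and
`e^q / (e^q - z)² = w (1 - z w)⁻²`, and `1 - z w` vanishes for some `w ∈ [0, 1]` only if
`z ∈ [1, ∞)`. By compactness `(1 - z w)⁻¹` is bounded uniformly for `w ∈ [0, 1]` and `z` in a
closed disc inside `ℂ ∖ [1, ∞)`, so the integrand and its `z`-derivative are dominated there by
a multiple of the Gamma integrand `e^{-q} q^{Re α - 1}`, and one can differentiate under the
integral sign.
-/

open Complex MeasureTheory Metric Set

def slitPlaneFromOne : Set ℂ := {z | ∀ x : ℝ, 1 ≤ x → z ≠ x}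

lemma isOpen_slitPlaneFromOne : IsOpen slitPlaneFromOne := by
  have hcompl : slitPlaneFromOne = (ofReal '' Ici 1)ᶜ := by
    ext z
    simp [slitPlaneFromOne, eq_comm]
  rw [hcompl, isOpen_compl_iff]
  exact isometry_ofReal.isClosedEmbedding.isClosedMap _ isClosed_Ici

lemma exp_ofReal_sub_ne_zero {z : ℂ} (hz : z ∈ slitPlaneFromOne) {q : ℝ} (hq : 0 ≤ q) :
    exp q - z ≠ 0 := by
  rw [sub_ne_zero, ← ofReal_exp]
  exact (hz _ (Real.one_le_exp hq)).symm

lemma one_sub_mul_ofReal_ne_zero {z : ℂ} (hz : z ∈ slitPlaneFromOne) {w : ℝ}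
    (hw : w ∈ Icc (0 : ℝ) 1) : 1 - z * w ≠ 0 := by
  rcases hw.1.eq_or_lt with rfl | hw0
  · simp
  intro h
  refine hz w⁻¹ (one_le_inv₀ hw0 |>.mpr hw.2) ?_
  rw [ofReal_inv]
  exact eq_inv_of_mul_eq_one_left (by linear_combination -h)

lemma exists_norm_inv_one_sub_mul_le {K : Set ℂ} (hK : IsCompact K)
    (hKS : K ⊆ slitPlaneFromOne) :
    ∃ C, ∀ z ∈ K, ∀ w ∈ Icc (0 : ℝ) 1, ‖(1 - z * w)⁻¹‖ ≤ C := by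
  have hcont : ContinuousOn (fun p : ℂ × ℝ => (1 - p.1 * p.2)⁻¹) (K ×ˢ Icc 0 1) :=
    ContinuousOn.inv₀ (by fun_prop) fun p hp => one_sub_mul_ofReal_ne_zero (hKS hp.1) hp.2
  obtain ⟨C, hC⟩ := (hK.prod isCompact_Icc).exists_bound_of_continuousOn hcont
  exact ⟨C, fun z hz w hw => hC (z, w) ⟨hz, hw⟩⟩

lemma exp_neg_mem_Icc {q : ℝ} (hq : 0 ≤ q) : Real.exp (-q) ∈ Icc (0 : ℝ) 1 :=
  ⟨(Real.exp_pos _).le, Real.exp_le_one_iff.mpr (neg_nonpos.mpr hq)⟩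

lemma exp_ofReal_eq_inv (q : ℝ) : exp q = ((Real.exp (-q) : ℝ) : ℂ)⁻¹ := by
  rw [Real.exp_neg, ofReal_inv, inv_inv, ofReal_exp]

-- No hypothesis on `1 - z * w` is needed: when it vanishes, both sides are `0`.
lemma div_inv_sub_eq {w : ℂ} (hw : w ≠ 0) (z : ℂ) : z / (w⁻¹ - z) = z * w * (1 - z * w)⁻¹ := by
  rw [show w⁻¹ - z = w⁻¹ * (1 - z * w) by field_simp, div_eq_mul_inv, mul_inv, inv_inv,
    mul_assoc]

lemma inv_div_inv_sub_sq_eq {w : ℂ} (hw : w ≠ 0) (z : ℂ) :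
    w⁻¹ / (w⁻¹ - z) ^ 2 = w * (1 - z * w)⁻¹ ^ 2 := by
  rw [show w⁻¹ - z = w⁻¹ * (1 - z * w) by field_simp, div_eq_mul_inv, mul_pow, mul_inv, inv_pow,
    inv_inv, inv_pow]
  field_simp

lemma norm_div_exp_sub_le {z : ℂ} {q C : ℝ} (hC : ‖(1 - z * Real.exp (-q))⁻¹‖ ≤ C) :
    ‖z / (exp q - z)‖ ≤ ‖z‖ * C * Real.exp (-q) := by
  rw [exp_ofReal_eq_inv, div_inv_sub_eq (ofReal_ne_zero.mpr (Real.exp_pos _).ne'), norm_mul,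
    norm_mul, norm_real, Real.norm_of_nonneg (Real.exp_pos _).le, mul_right_comm]
  gcongr

lemma norm_exp_div_exp_sub_sq_le {z : ℂ} {q C : ℝ} (hC : ‖(1 - z * Real.exp (-q))⁻¹‖ ≤ C) :
    ‖exp q / (exp q - z) ^ 2‖ ≤ C ^ 2 * Real.exp (-q) := by
  rw [exp_ofReal_eq_inv, inv_div_inv_sub_sq_eq (ofReal_ne_zero.mpr (Real.exp_pos _).ne'),
    norm_mul, norm_pow, norm_real, Real.norm_of_nonneg (Real.exp_pos _).le, mul_comm]
  gcongr

lemma norm_ofReal_cpow_mul_le {α g : ℂ} {q C : ℝ} (hq : 0 < q) (hg : ‖g‖ ≤ C * Real.exp (-q)) :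
    ‖(q : ℂ) ^ (α - 1) * g‖ ≤ C * (Real.exp (-q) * q ^ (α.re - 1)) := by
  rw [norm_mul, norm_cpow_eq_rpow_re_of_pos hq, sub_re, one_re]
  calc q ^ (α.re - 1) * ‖g‖ ≤ q ^ (α.re - 1) * (C * Real.exp (-q)) := by gcongr
    _ = _ := by ring

lemma integrableOn_ofReal_cpow_mul {α : ℂ} (hα : 0 < α.re) {g : ℝ → ℂ} {C : ℝ}
    (hg : ContinuousOn g (Ioi 0)) (hbound : ∀ q ∈ Ioi (0 : ℝ), ‖g q‖ ≤ C * Real.exp (-q)) :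
    IntegrableOn (fun q : ℝ => (q : ℂ) ^ (α - 1) * g q) (Ioi 0) := by
  refine Integrable.mono' ((Real.GammaIntegral_convergent hα).const_mul C) ?_
    ((ae_restrict_iff' measurableSet_Ioi).mpr (.of_forall fun q hq =>
      norm_ofReal_cpow_mul_le hq (hbound q hq)))
  refine ContinuousOn.aestronglyMeasurable (ContinuousOn.mul ?_ hg) measurableSet_Ioi
  exact fun q hq => (continuousAt_ofReal_cpow_const q _ (.inr (ne_of_gt hq))).continuousWithinAt

noncomputable def appellIntegrand (α z : ℂ) (q : ℝ) : ℂ := (q : ℂ) ^ (α - 1) * (z / (exp q - z))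

lemma integrableOn_appellIntegrand {α z : ℂ} (hα : 0 < α.re) (hz : z ∈ slitPlaneFromOne) :
    IntegrableOn (appellIntegrand α z) (Ioi 0) := by
  obtain ⟨C, hC⟩ :=
    exists_norm_inv_one_sub_mul_le isCompact_singleton (singleton_subset_iff.mpr hz)
  exact integrableOn_ofReal_cpow_mul hα
    (continuousOn_const.div (by fun_prop) fun q hq => exp_ofReal_sub_ne_zero hz (le_of_lt hq))
    fun q hq => norm_div_exp_sub_le (hC z rfl _ (exp_neg_mem_Icc (le_of_lt hq)))

lemma hasDerivAt_div_sub {w z : ℂ} (hwz : w - z ≠ 0) :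
    HasDerivAt (fun y : ℂ => y / (w - y)) (w / (w - z) ^ 2) z := by
  have h := (hasDerivAt_id' z).fun_div ((hasDerivAt_id' z).const_sub w) hwz
  rwa [show 1 * (w - z) - z * -1 = w by ring] at h

lemma differentiableAt_integral_appellIntegrand {α z₀ : ℂ} (hα : 0 < α.re)
    (hz₀ : z₀ ∈ slitPlaneFromOne) :
    DifferentiableAt ℂ (fun z => ∫ q in Ioi 0, appellIntegrand α z q) z₀ := by
  obtain ⟨ε, hε, hball⟩ := nhds_basis_closedBall.mem_iff.mp (isOpen_slitPlaneFromOne.mem_nhds hz₀)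
  obtain ⟨C, hC⟩ := exists_norm_inv_one_sub_mul_le (isCompact_closedBall z₀ ε) hball
  have hC' : ∀ z ∈ ball z₀ ε, ∀ q : ℝ, 0 ≤ q → ‖(1 - z * Real.exp (-q))⁻¹‖ ≤ C :=
    fun z hz q hq => hC z (ball_subset_closedBall hz) _ (exp_neg_mem_Icc hq)
  have hS : ball z₀ ε ⊆ slitPlaneFromOne := ball_subset_closedBall.trans hball
  refine (hasDerivAt_integral_of_dominated_loc_of_deriv_le
    (F' := fun z q => (q : ℂ) ^ (α - 1) * (exp q / (exp q - z) ^ 2))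
    (bound := fun q => C ^ 2 * (Real.exp (-q) * q ^ (α.re - 1)))
    (ball_mem_nhds z₀ hε) ?_ (integrableOn_appellIntegrand hα hz₀) ?_ ?_
    ((Real.GammaIntegral_convergent hα).const_mul _) ?_).2.differentiableAt
  · filter_upwards [ball_mem_nhds z₀ hε] with z hz
    exact (integrableOn_appellIntegrand hα (hS hz)).aestronglyMeasurable
  · refine (integrableOn_ofReal_cpow_mul hα ?_ fun q hq => norm_exp_div_exp_sub_sq_le
      (hC' z₀ (mem_ball_self hε) q (le_of_lt hq))).aestronglyMeasurable
    exact ContinuousOn.div (by fun_prop) (by fun_prop)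
      fun q hq => pow_ne_zero 2 (exp_ofReal_sub_ne_zero hz₀ (le_of_lt hq))
  · refine (ae_restrict_iff' measurableSet_Ioi).mpr (.of_forall fun q hq z hz => ?_)
    exact norm_ofReal_cpow_mul_le hq (norm_exp_div_exp_sub_sq_le (hC' z hz q (le_of_lt hq)))
  · refine (ae_restrict_iff' measurableSet_Ioi).mpr (.of_forall fun q hq z hz => ?_)
    exact (hasDerivAt_div_sub (exp_ofReal_sub_ne_zero (hS hz) (le_of_lt hq))).const_mul _

/-- For `Re α > 0` and `z ∈ ℂ ∖ [1,∞)`, Appell's integral converges absolutely, and the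
function of `z` it defines is holomorphic on `ℂ ∖ [1,∞)`. -/
theorem appell_integrable_and_holomorphic (α : ℂ) (hα : 0 < α.re) :
    (∀ z : ℂ, (∀ x : ℝ, 1 ≤ x → z ≠ (x : ℂ)) →
        IntegrableOn (fun q : ℝ => (q : ℂ) ^ (α - 1) * (z / (Complex.exp q - z)))
          (Set.Ioi 0)) ∧
      DifferentiableOn ℂ
        (fun z : ℂ =>
          ∫ q in Set.Ioi (0 : ℝ), (q : ℂ) ^ (α - 1) * (z / (Complex.exp q - z)))
        {z : ℂ | ∀ x : ℝ, 1 ≤ x → z ≠ (x : ℂ)} :=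
  ⟨fun _ hz => integrableOn_appellIntegrand hα hz,
    fun _ hz => (differentiableAt_integral_appellIntegrand hα hz).differentiableWithinAt⟩
end

section
/- For every complex z not of the form e^q for any q on the real line (equivalently z ∉ [0,∞) suffices), the function q ↦ z/(e^q − z) has the partial fraction expansion z/(e^q − z) = −1/2 + 1/(q − Log z) + ∑_{k=1}^∞ [ 1/(q − Log z + 2πik) + 1/(q − Log z − 2πik) ], with the series converging locally uniformly in q away from the poles. -/
/-!
With `w = q - Log z` the claim becomes
`1/(e^w - 1) - 1/w + 1/2 = ∑ₖ [1/(w + 2πi(k+1)) + 1/(w - 2πi(k+1))]`, which is the cotangent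
expansion `π cot(πx) - 1/x = ∑ₙ [1/(x - (n+1)) + 1/(x + (n+1))]` at `x = w/(2πi)` divided by `2πi`,
because `π cot(πx)/(2πi) = 1/(e^w - 1) + 1/2`. For `‖w‖ ≤ k + 1` the `k`-th term is at most
`2‖w‖/(k+1)²`, so the Weierstrass M-test gives uniform convergence on bounded sets.
-/

open Complex Filter Topology

open scoped Real

noncomputable def expPoleTerm (w : ℂ) (k : ℕ) : ℂ :=
  1 / (w + 2 * π * I * (k + 1)) + 1 / (w - 2 * π * I * (k + 1))

theorem div_two_pi_I_mem_integerComplement {w : ℂ} (hw : exp w ≠ 1) :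
    w / (2 * π * I) ∈ integerComplement := by
  rintro ⟨n, hn⟩
  exact hw (exp_eq_one_iff.mpr ⟨n, (div_eq_iff two_pi_I_ne_zero).mp hn.symm⟩)

theorem expPoleTerm_eq_inv_two_pi_I_mul_cotTerm (w : ℂ) (k : ℕ) :
    expPoleTerm w k = (2 * π * I)⁻¹ * cotTerm (w / (2 * π * I)) k := by
  have hsub : w / (2 * π * I) - (k + 1) = (w - 2 * π * I * (k + 1)) / (2 * π * I) := by
    field_simp
  have hadd : w / (2 * π * I) + (k + 1) = (w + 2 * π * I * (k + 1)) / (2 * π * I) := by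
    field_simp
  rw [expPoleTerm, cotTerm, hsub, hadd, one_div_div, one_div_div, mul_add (2 * π * I)⁻¹,
    ← mul_div_assoc, ← mul_div_assoc, inv_mul_cancel₀ two_pi_I_ne_zero, add_comm]

theorem hasSum_expPoleTerm {w : ℂ} (hw : exp w ≠ 1) :
    HasSum (expPoleTerm w) (1 / (exp w - 1) - 1 / w + 1 / 2) := by
  set x := w / (2 * π * I)
  have hx := div_two_pi_I_mem_integerComplement hw
  have hcot : HasSum (cotTerm x) (π * cot (π * x) - 1 / x) := by
    rw [cot_series_rep' hx]
    exact (summable_cotTerm hx).hasSum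
  have hval : 1 / (exp w - 1) - 1 / w + 1 / 2 = (2 * π * I)⁻¹ * (π * cot (π * x) - 1 / x) := by
    have hw0 : w ≠ 0 := by rintro rfl; exact hw exp_zero
    have h1w : 1 - exp w ≠ 0 := sub_ne_zero.mpr hw.symm
    rw [cot_pi_eq_exp_ratio, mul_div_cancel₀ _ two_pi_I_ne_zero, one_div_div]
    field_simp
    rw [I_sq]
    ring
  rw [hval, funext (expPoleTerm_eq_inv_two_pi_I_mul_cotTerm w)]
  exact hcot.mul_left _

theorem norm_one_div_add_add_one_div_sub_le {𝕜 : Type*} [NormedField 𝕜] {w c : 𝕜} {r : ℝ}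
    (hr : 0 < r) (h : ‖w‖ + r ≤ ‖c‖) :
    ‖1 / (w + c) + 1 / (w - c)‖ ≤ 2 * ‖w‖ / r ^ 2 := by
  have hadd : r ≤ ‖w + c‖ := by
    have := norm_sub_norm_le c (-w)
    rw [norm_neg, sub_neg_eq_add, add_comm] at this
    linarith
  have hsub : r ≤ ‖w - c‖ := by
    have := norm_sub_norm_le c w
    rw [norm_sub_rev] at this
    linarith
  have hadd0 : w + c ≠ 0 := norm_pos_iff.mp (hr.trans_le hadd)
  have hsub0 : w - c ≠ 0 := norm_pos_iff.mp (hr.trans_le hsub)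
  rw [div_add_div _ _ hadd0 hsub0, one_mul, mul_one, sub_add_add_cancel, norm_div, norm_mul]
  calc ‖w + w‖ / (‖w + c‖ * ‖w - c‖) ≤ (‖w‖ + ‖w‖) / (r * r) := by
        gcongr
        exact norm_add_le w w
    _ = 2 * ‖w‖ / r ^ 2 := by ring

theorem norm_expPoleTerm_le {w : ℂ} {k : ℕ} (hw : ‖w‖ ≤ k + 1) :
    ‖expPoleTerm w k‖ ≤ 2 * ‖w‖ / (k + 1) ^ 2 := by
  refine norm_one_div_add_add_one_div_sub_le (by positivity) ?_
  have hk : ‖(k : ℂ) + 1‖ = k + 1 := by exact_mod_cast Complex.norm_natCast (k + 1)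
  have hc : ‖2 * π * I * ((k : ℂ) + 1)‖ = 2 * π * (k + 1) := by
    simp [hk, abs_of_pos Real.pi_pos]
  rw [hc]
  nlinarith [Real.pi_gt_three]

theorem summable_const_div_nat_add_one_sq (C : ℝ) :
    Summable fun k : ℕ => C / ((k : ℝ) + 1) ^ 2 := by
  have := (summable_nat_add_iff 1).mpr (Real.summable_one_div_nat_pow.mpr one_lt_two)
  simpa [div_eq_mul_one_div C] using this.mul_left C

-- On all of `ℂ`: at a pole the term takes the junk value `1/0 = 0`, which obeys the same bound.
theorem tendstoLocallyUniformly_sum_expPoleTerm :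
    TendstoLocallyUniformly (fun N w => ∑ k ∈ Finset.range N, expPoleTerm w k)
      (fun w => ∑' k, expPoleTerm w k) atTop := by
  rw [tendstoLocallyUniformly_iff_forall_isCompact]
  intro K hK
  obtain ⟨R, hR⟩ := hK.isBounded.subset_closedBall 0
  refine tendstoUniformlyOn_tsum_nat_eventually (summable_const_div_nat_add_one_sq (2 * R)) ?_
  filter_upwards [eventually_ge_atTop ⌈R⌉₊] with k hk w hw
  have hwR : ‖w‖ ≤ R := by simpa using hR hw
  have hRk : R ≤ k + 1 := by
    have := (Nat.le_ceil R).trans (Nat.cast_le.mpr hk)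
    linarith
  calc ‖expPoleTerm w k‖ ≤ 2 * ‖w‖ / (k + 1) ^ 2 := norm_expPoleTerm_le (hwR.trans hRk)
    _ ≤ 2 * R / (k + 1) ^ 2 := by gcongr

theorem hasSum_expPoleTerm_sub_log {z q : ℂ} (hz : z ≠ 0) (hq : exp q ≠ z) :
    HasSum (expPoleTerm (q - log z)) (z / (exp q - z) - 1 / (q - log z) + 1 / 2) := by
  have hexp : exp (q - log z) = exp q / z := by rw [exp_sub, exp_log hz]
  convert hasSum_expPoleTerm (w := q - log z) (by rwa [hexp, Ne, div_eq_one_iff_eq hz]) using 2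
  rw [hexp]
  have hqz : exp q - z ≠ 0 := sub_ne_zero.mpr hq
  field_simp

/-- Mittag-Leffler (partial fraction) expansion of `q ↦ z/(e^q - z)` for `z ∉ [0,∞)`:
`z/(e^q - z) = -1/2 + 1/(q - Log z) + ∑_{k≥1} [1/(q - Log z + 2πik) + 1/(q - Log z - 2πik)]`,
the series of partial sums converging locally uniformly on the complement of the poles. -/
theorem mittag_leffler_exp (z : ℂ) (hz : ∀ x : ℝ, 0 ≤ x → z ≠ (x : ℂ)) :
    (∀ q : ℂ, Complex.exp q ≠ z →
        z / (Complex.exp q - z) =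
          -1 / 2 + 1 / (q - Complex.log z) +
            ∑' k : ℕ,
              (1 / (q - Complex.log z + 2 * Real.pi * Complex.I * (k + 1)) +
               1 / (q - Complex.log z - 2 * Real.pi * Complex.I * (k + 1)))) ∧
      TendstoLocallyUniformlyOn
        (fun (N : ℕ) (q : ℂ) =>
          -1 / 2 + 1 / (q - Complex.log z) +
            ∑ k ∈ Finset.range N,
              (1 / (q - Complex.log z + 2 * Real.pi * Complex.I * (k + 1)) +
               1 / (q - Complex.log z - 2 * Real.pi * Complex.I * (k + 1))))
        (fun q : ℂ => z / (Complex.exp q - z))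
        atTop
        {q : ℂ | Complex.exp q ≠ z} := by
  have hz0 : z ≠ 0 := by simpa using hz 0 le_rfl
  have hexpansion : ∀ q, exp q ≠ z →
      z / (exp q - z) = -1 / 2 + 1 / (q - log z) + ∑' k, expPoleTerm (q - log z) k := by
    intro q hq
    rw [(hasSum_expPoleTerm_sub_log hz0 hq).tsum_eq]
    ring
  refine ⟨hexpansion, ?_⟩
  have hconst : TendstoLocallyUniformlyOn (fun (_ : ℕ) (q : ℂ) => -1 / 2 + 1 / (q - log z))
      (fun q => -1 / 2 + 1 / (q - log z)) atTop {q | exp q ≠ z} :=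
    fun _ hu _ _ => ⟨_, self_mem_nhdsWithin, .of_forall fun _ _ _ => refl_mem_uniformity hu⟩
  have hseries := (tendstoLocallyUniformly_sum_expPoleTerm.comp (· - log z)
    (by fun_prop)).tendstoLocallyUniformlyOn (s := {q | exp q ≠ z})
  exact (hconst.add hseries).congr_right fun q hq => (hexpansion q hq).symm
end
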